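/- Let μ = N(m_1, Σ) and ν = N(m_2, Σ) be Gaussian measures on ℝ^d with the same positive definite covariance Σ, and let 0 ≤ ε < 1/2. Then DR_{2,ε}(μ,ν) = DR_{1,ε}(μ,ν) = ‖m_1 − m_2‖, where the depth-region discrepancies are computed with the halfspace depth; in particular, for every α ∈ (ε, 1/2] the Hausdorff distance between the halfspace depth regions satisfies d_H(D_μ^α, D_ν^α) = ‖m_1 − m_2‖. -/

import Mathlib

open MeasureTheory ProbabilityTheory
open scoped RealInnerProductSpace

/-- The halfspace (Tukey) depth of `x` w.r.t. a measure `ρ` on `ℝ^d`. -/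
noncomputable def halfspaceDepth (d : ℕ) (ρ : Measure (EuclideanSpace ℝ (Fin d)))
    (x : EuclideanSpace ℝ (Fin d)) : ℝ :=
  ⨅ u : Metric.sphere (0 : EuclideanSpace ℝ (Fin d)) 1,
    (ρ {y | ⟪(u : EuclideanSpace ℝ (Fin d)), y⟫ ≤ ⟪(u : EuclideanSpace ℝ (Fin d)), x⟫}).toReal

/-- The `α`-depth region of the halfspace depth. -/
def hdRegion (d : ℕ) (ρ : Measure (EuclideanSpace ℝ (Fin d))) (α : ℝ) :
    Set (EuclideanSpace ℝ (Fin d)) :=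
  {x | α ≤ halfspaceDepth d ρ x}

/-- The quadratic form `u ↦ uᵀ Σ u` of a matrix `Σ` on `ℝ^d`. -/
def quadForm (d : ℕ) (S : Matrix (Fin d) (Fin d) ℝ) (u : EuclideanSpace ℝ (Fin d)) : ℝ :=
  dotProduct (fun i => u i) (S.mulVec (fun i => u i))

/-- The depth-region discrepancy `DR_{p,ε}` (with `α* = 1/2`, the maximal halfspace
depth of a Gaussian measure) computed with the halfspace depth. -/
noncomputable def DRpe (d : ℕ) (p ε : ℝ)
    (μ ν : Measure (EuclideanSpace ℝ (Fin d))) : ℝ :=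
  ((1 / 2 - ε)⁻¹ * ∫ α in ε..(1 / 2),
    (Metric.hausdorffDist (hdRegion d μ α) (hdRegion d ν α)) ^ p) ^ (1 / p)

/-!
Every one-dimensional projection of `N(m, Σ)` is Gaussian, so the halfspace
`{y | ⟪u, y⟫ ≤ ⟪u, x⟫}` has mass `Φ (⟪u, x - m⟫ / √(uᵀ Σ u))`. Hence the depth of `x` depends
only on `x - m`: the depth regions of `ν` are those of `μ` translated by `m₂ - m₁`. For
`0 < α ≤ 1/2` they are nonempty (the mean has depth `1/2`) and bounded (far from the mean some
halfspace has mass below `α`), and a nonempty bounded set is at Hausdorff distance exactly `‖v‖`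
from its translate by `v`. So the integrand of `DR_{p,ε}` is the constant `‖m₁ - m₂‖`.
-/

open Set Filter Metric
open scoped NNReal

local notation "Φ" => cdf (gaussianReal 0 1)

lemma gaussianReal_map_standardize {m : ℝ} {v : ℝ≥0} (hv : v ≠ 0) :
    (gaussianReal m v).map (fun x => (x - m) / √v) = gaussianReal 0 1 := by
  have : (fun x => (x - m) / √v) = (· / √v) ∘ (· - m) := rfl
  rw [this, ← Measure.map_map (by fun_prop) (by fun_prop), gaussianReal_map_sub_const,
    gaussianReal_map_div_const, sub_self, zero_div]
  congr 1
  ext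
  simp [hv]

lemma gaussianReal_real_Iic_eq_cdf {m : ℝ} {v : ℝ≥0} (hv : v ≠ 0) (t : ℝ) :
    (gaussianReal m v).real (Iic t) = Φ ((t - m) / √v) := by
  have hsqrt : 0 < √(v : ℝ) := Real.sqrt_pos.2 (by positivity)
  have hpre : (fun x => (x - m) / √v) ⁻¹' Iic ((t - m) / √v) = Iic t := by
    ext x
    simp [div_le_div_iff_of_pos_right hsqrt]
  rw [cdf_eq_real, ← gaussianReal_map_standardize (m := m) hv,
    map_measureReal_apply (by fun_prop) measurableSet_Iic, hpre]

lemma cdf_standardGaussian_zero : Φ 0 = 1 / 2 := by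
  have hsymm : (gaussianReal 0 1).real (Iic 0) = (gaussianReal 0 1).real (Ici 0) := by
    conv_lhs => rw [← neg_zero, ← gaussianReal_map_neg]
    rw [map_measureReal_apply (by fun_prop) measurableSet_Iic]
    congr 1
    ext x
    simp
  have hatom : (gaussianReal 0 1).real {0} = 0 := by
    simp [measureReal_def, gaussianReal_absolutelyContinuous 0 one_ne_zero (measure_singleton 0)]
  have hsum := measureReal_union_add_inter (μ := gaussianReal 0 1) (s := Iic (0 : ℝ))
    (measurableSet_Ici (a := 0))
  rw [Iic_union_Ici, Iic_inter_Ici, Icc_self, hatom, probReal_univ, ← hsymm] at hsum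
  rw [cdf_eq_real]
  linarith

lemma hausdorffDist_image_add_right {E : Type*} [NormedAddCommGroup E] [InnerProductSpace ℝ E]
    [ProperSpace E] {A : Set E} (hA : Bornology.IsBounded A) (hne : A.Nonempty) (v : E) :
    hausdorffDist A ((· + v) '' A) = ‖v‖ := by
  have hfin : hausdorffEDist A ((· + v) '' A) ≠ ⊤ :=
    hausdorffEDist_ne_top_of_nonempty_of_bounded hne (hne.image _) hA
      ((IsometryEquiv.addRight v).isometry.lipschitz.isBounded_image hA)
  refine le_antisymm ?_ ?_
  · refine hausdorffDist_le_of_mem_dist (norm_nonneg v) (fun x hx => ?_) ?_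
    · exact ⟨x + v, mem_image_of_mem _ hx, by simp [dist_eq_norm]⟩
    · rintro _ ⟨x, hx, rfl⟩
      exact ⟨x, hx, by simp [dist_eq_norm]⟩
  -- A point of `closure A` extreme in the direction `v` is pushed a distance `‖v‖` away from `A`.
  obtain ⟨a, haA, hmax⟩ := hA.isCompact_closure.exists_isMaxOn hne.closure
    (f := fun x => ⟪v, x⟫) (by fun_prop)
  have hfar : ‖v‖ ≤ infDist (a + v) A := by
    refine (le_infDist hne).2 fun b hb => ?_
    have hvb : ⟪v, b⟫ ≤ ⟪v, a⟫ := hmax (subset_closure hb)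
    have hsq : ‖v‖ ^ 2 ≤ ‖v‖ * ‖a + v - b‖ := by
      calc ‖v‖ ^ 2 ≤ ⟪v, a + v - b⟫ := by
            rw [inner_sub_right, inner_add_right, real_inner_self_eq_norm_sq]; linarith
        _ ≤ ‖v‖ * ‖a + v - b‖ := real_inner_le_norm _ _
    rw [dist_eq_norm]
    nlinarith [norm_nonneg v, norm_nonneg (a + v - b)]
  have hmem : a + v ∈ closure ((· + v) '' A) :=
    image_closure_subset_closure_image (continuous_add_const v) (mem_image_of_mem _ haA)
  calc ‖v‖ ≤ infDist (a + v) A := hfar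
    _ ≤ hausdorffDist (closure ((· + v) '' A)) A :=
        infDist_le_hausdorffDist_of_mem hmem
          (by rwa [hausdorffEDist_closure_left, hausdorffEDist_comm])
    _ = hausdorffDist A ((· + v) '' A) := by rw [hausdorffDist_closure₁, hausdorffDist_comm]

def HasGaussianProjections (d : ℕ) (m : EuclideanSpace ℝ (Fin d))
    (S : Matrix (Fin d) (Fin d) ℝ) (ρ : Measure (EuclideanSpace ℝ (Fin d))) : Prop :=
  ∀ u : EuclideanSpace ℝ (Fin d),
    Measure.map (fun x => ⟪u, x⟫) ρ = gaussianReal ⟪u, m⟫ (Real.toNNReal (quadForm d S u))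

section GaussianDepth

variable {d : ℕ} {S : Matrix (Fin d) (Fin d) ℝ} {m : EuclideanSpace ℝ (Fin d)}
  {ρ : Measure (EuclideanSpace ℝ (Fin d))}

lemma quadForm_pos (hS : S.PosDef) {u : EuclideanSpace ℝ (Fin d)} (hu : u ≠ 0) :
    0 < quadForm d S u :=
  hS.dotProduct_mulVec_pos fun h => hu (PiLp.ext (congrFun h))

lemma continuous_quadForm : Continuous (quadForm d S) := by
  unfold quadForm; fun_prop

lemma measure_halfspace_toReal_eq_cdf (hS : S.PosDef) (hρ : HasGaussianProjections d m S ρ)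
    {u : EuclideanSpace ℝ (Fin d)} (hu : u ≠ 0) (x : EuclideanSpace ℝ (Fin d)) :
    (ρ {y | ⟪u, y⟫ ≤ ⟪u, x⟫}).toReal = Φ (⟪u, x - m⟫ / √(quadForm d S u)) := by
  have hq := quadForm_pos hS hu
  have hpre : {y | ⟪u, y⟫ ≤ ⟪u, x⟫} = (fun y => ⟪u, y⟫) ⁻¹' Iic ⟪u, x⟫ := rfl
  rw [hpre, ← measureReal_def, ← map_measureReal_apply (by fun_prop) measurableSet_Iic, hρ u,
    gaussianReal_real_Iic_eq_cdf (by simpa using hq), Real.coe_toNNReal _ hq.le, inner_sub_right]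

lemma halfspaceDepth_eq_iInf_cdf (hS : S.PosDef) (hρ : HasGaussianProjections d m S ρ)
    (x : EuclideanSpace ℝ (Fin d)) :
    halfspaceDepth d ρ x =
      ⨅ u : sphere (0 : EuclideanSpace ℝ (Fin d)) 1,
        Φ (⟪(u : EuclideanSpace ℝ (Fin d)), x - m⟫ / √(quadForm d S u)) :=
  iInf_congr fun u => measure_halfspace_toReal_eq_cdf hS hρ (ne_zero_of_mem_unit_sphere u) x

lemma halfspaceDepth_add_sub {μ ν : Measure (EuclideanSpace ℝ (Fin d))}
    {m₁ m₂ : EuclideanSpace ℝ (Fin d)} (hS : S.PosDef)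
    (hμ : HasGaussianProjections d m₁ S μ) (hν : HasGaussianProjections d m₂ S ν)
    (x : EuclideanSpace ℝ (Fin d)) :
    halfspaceDepth d ν (x + (m₂ - m₁)) = halfspaceDepth d μ x := by
  rw [halfspaceDepth_eq_iInf_cdf hS hν, halfspaceDepth_eq_iInf_cdf hS hμ,
    show x + (m₂ - m₁) - m₂ = x - m₁ by abel]

lemma hdRegion_eq_image_add {μ ν : Measure (EuclideanSpace ℝ (Fin d))}
    {m₁ m₂ : EuclideanSpace ℝ (Fin d)} (hS : S.PosDef)
    (hμ : HasGaussianProjections d m₁ S μ) (hν : HasGaussianProjections d m₂ S ν) (α : ℝ) :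
    hdRegion d ν α = (· + (m₂ - m₁)) '' hdRegion d μ α := by
  ext x
  refine ⟨fun hx => ⟨x - (m₂ - m₁), ?_, sub_add_cancel x _⟩, ?_⟩
  · change α ≤ halfspaceDepth d μ (x - (m₂ - m₁))
    rwa [← halfspaceDepth_add_sub hS hμ hν, sub_add_cancel]
  · rintro ⟨y, hy, rfl⟩
    change α ≤ halfspaceDepth d ν (y + (m₂ - m₁))
    rwa [halfspaceDepth_add_sub hS hμ hν]

lemma halfspaceDepth_mean (hd : 0 < d) (hS : S.PosDef) (hρ : HasGaussianProjections d m S ρ) :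
    halfspaceDepth d ρ m = 1 / 2 := by
  have : Nonempty (Fin d) := ⟨⟨0, hd⟩⟩
  have : Nonempty (sphere (0 : EuclideanSpace ℝ (Fin d)) 1) :=
    (NormedSpace.sphere_nonempty.2 zero_le_one).to_subtype
  simp only [halfspaceDepth_eq_iInf_cdf hS hρ, sub_self, inner_zero_right, zero_div,
    cdf_standardGaussian_zero, ciInf_const]

lemma isBounded_hdRegion (hS : S.PosDef) (hρ : HasGaussianProjections d m S ρ) {α : ℝ}
    (hα : 0 < α) : Bornology.IsBounded (hdRegion d ρ α) := by
  obtain ⟨s, hsα, hs⟩ := (((tendsto_cdf_atBot (gaussianReal 0 1)).eventually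
    (eventually_lt_nhds hα)).and (eventually_lt_atBot 0)).exists
  obtain ⟨C, hC⟩ := (isCompact_sphere (0 : EuclideanSpace ℝ (Fin d)) 1).bddAbove_image
    (continuous_quadForm (S := S)).continuousOn
  -- Far from `m`, the halfspace facing away from `m` has Gaussian mass at most `Φ s < α`.
  refine (isBounded_closedBall (x := m) (r := -s * √C)).subset fun x hx => ?_
  by_contra hfar
  rw [mem_closedBall, dist_eq_norm, not_le] at hfar
  set r := ‖x - m‖ with hr_def
  have hr : 0 < r := (mul_nonneg (neg_nonneg.2 hs.le) (Real.sqrt_nonneg C)).trans_lt hfar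
  set u : EuclideanSpace ℝ (Fin d) := r⁻¹ • (m - x)
  have hu : u ∈ sphere (0 : EuclideanSpace ℝ (Fin d)) 1 := by
    rw [mem_sphere_zero_iff_norm, norm_smul, norm_sub_rev, norm_inv, norm_norm,
      inv_mul_cancel₀ hr.ne']
  have hux : ⟪u, x - m⟫ = -r := by
    rw [real_inner_smul_left, ← neg_sub, inner_neg_left, real_inner_self_eq_norm_sq, ← hr_def]
    field_simp
  have hq : 0 < quadForm d S u := quadForm_pos hS (ne_zero_of_mem_unit_sphere ⟨u, hu⟩)
  have hqC : √(quadForm d S u) ≤ √C := Real.sqrt_le_sqrt (hC (mem_image_of_mem _ hu))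
  have hle : -r / √(quadForm d S u) ≤ s := by
    rw [div_le_iff₀ (Real.sqrt_pos.2 hq)]
    nlinarith
  have hdepth : halfspaceDepth d ρ x ≤ Φ (-r / √(quadForm d S u)) := by
    rw [halfspaceDepth_eq_iInf_cdf hS hρ, ← hux]
    exact ciInf_le ⟨0, by rintro _ ⟨w, rfl⟩; exact cdf_nonneg _ _⟩ (⟨u, hu⟩ : sphere _ 1)
  have hx' : α ≤ halfspaceDepth d ρ x := hx
  linarith [monotone_cdf (gaussianReal 0 1) hle]

end GaussianDepth

lemma hausdorffDist_hdRegion {d : ℕ} {S : Matrix (Fin d) (Fin d) ℝ} (hS : S.PosDef)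
    {μ ν : Measure (EuclideanSpace ℝ (Fin d))} {m₁ m₂ : EuclideanSpace ℝ (Fin d)}
    (hμ : HasGaussianProjections d m₁ S μ) (hν : HasGaussianProjections d m₂ S ν)
    {α : ℝ} (hα₀ : 0 < α) (hα : α ≤ 1 / 2) :
    hausdorffDist (hdRegion d μ α) (hdRegion d ν α) = ‖m₁ - m₂‖ := by
  rw [hdRegion_eq_image_add hS hμ hν]
  obtain rfl | hd := Nat.eq_zero_or_pos d
  -- In dimension `0` the unit sphere is empty, so the regions are empty; but then `m₁ = m₂`.
  · rw [Subsingleton.elim m₂ m₁, sub_self, norm_zero]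
    simp
  have hmem : m₁ ∈ hdRegion d μ α := by
    change α ≤ halfspaceDepth d μ m₁
    rwa [halfspaceDepth_mean hd hS hμ]
  rw [hausdorffDist_image_add_right (isBounded_hdRegion hS hμ hα₀) ⟨m₁, hmem⟩, norm_sub_rev]

lemma DRpe_eq_of_hausdorffDist_eq {d : ℕ} {μ ν : Measure (EuclideanSpace ℝ (Fin d))}
    {p ε c : ℝ} (hp : 0 < p) (hε : ε < 1 / 2) (hc : 0 ≤ c)
    (h : ∀ α ∈ Ioc ε (1 / 2 : ℝ), hausdorffDist (hdRegion d μ α) (hdRegion d ν α) = c) :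
    DRpe d p ε μ ν = c := by
  have hint : ∫ α in ε..(1 / 2), hausdorffDist (hdRegion d μ α) (hdRegion d ν α) ^ p =
      (1 / 2 - ε) * c ^ p := by
    rw [intervalIntegral.integral_of_le hε.le,
      setIntegral_congr_fun measurableSet_Ioc (g := fun _ => c ^ p) fun α hα => by rw [h α hα],
      setIntegral_const, Real.volume_real_Ioc_of_le hε.le, smul_eq_mul]
  rw [DRpe, hint, inv_mul_cancel_left₀ (sub_ne_zero.2 hε.ne'), ← Real.rpow_mul hc,
    mul_one_div_cancel hp.ne', Real.rpow_one]

theorem stmt_19_general (d : ℕ)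
    (m₁ m₂ : EuclideanSpace ℝ (Fin d)) (S : Matrix (Fin d) (Fin d) ℝ) (hS : S.PosDef)
    (μ ν : Measure (EuclideanSpace ℝ (Fin d)))
    -- `μ = N(m₁, Σ)` and `ν = N(m₂, Σ)` with the same covariance `Σ`
    (hμ : ∀ u : EuclideanSpace ℝ (Fin d),
      Measure.map (fun x => ⟪u, x⟫) μ =
        gaussianReal ⟪u, m₁⟫ (Real.toNNReal (quadForm d S u)))
    (hν : ∀ u : EuclideanSpace ℝ (Fin d),
      Measure.map (fun x => ⟪u, x⟫) ν =
        gaussianReal ⟪u, m₂⟫ (Real.toNNReal (quadForm d S u)))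
    (ε : ℝ) (hε : 0 ≤ ε) (hε2 : ε < 1 / 2) :
    DRpe d 2 ε μ ν = ‖m₁ - m₂‖ ∧
    DRpe d 1 ε μ ν = ‖m₁ - m₂‖ ∧
    ∀ α ∈ Set.Ioc ε (1 / 2 : ℝ),
      Metric.hausdorffDist (hdRegion d μ α) (hdRegion d ν α) = ‖m₁ - m₂‖ := by
  have h : ∀ α ∈ Set.Ioc ε (1 / 2 : ℝ),
      hausdorffDist (hdRegion d μ α) (hdRegion d ν α) = ‖m₁ - m₂‖ :=
    fun α hα => hausdorffDist_hdRegion hS hμ hν (hε.trans_lt hα.1) hα.2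
  exact ⟨DRpe_eq_of_hausdorffDist_eq two_pos hε2 (norm_nonneg _) h,
    DRpe_eq_of_hausdorffDist_eq one_pos hε2 (norm_nonneg _) h, h⟩

theorem stmt_19 (d : ℕ)
    (m₁ m₂ : EuclideanSpace ℝ (Fin d)) (S : Matrix (Fin d) (Fin d) ℝ) (hS : S.PosDef)
    (μ ν : Measure (EuclideanSpace ℝ (Fin d)))
    [IsProbabilityMeasure μ] [IsProbabilityMeasure ν]
    -- `μ = N(m₁, Σ)` and `ν = N(m₂, Σ)` with the same covariance `Σ`
    (hμ : ∀ u : EuclideanSpace ℝ (Fin d),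
      Measure.map (fun x => ⟪u, x⟫) μ =
        gaussianReal ⟪u, m₁⟫ (Real.toNNReal (quadForm d S u)))
    (hν : ∀ u : EuclideanSpace ℝ (Fin d),
      Measure.map (fun x => ⟪u, x⟫) ν =
        gaussianReal ⟪u, m₂⟫ (Real.toNNReal (quadForm d S u)))
    (ε : ℝ) (hε : 0 ≤ ε) (hε2 : ε < 1 / 2) :
    DRpe d 2 ε μ ν = ‖m₁ - m₂‖ ∧
    DRpe d 1 ε μ ν = ‖m₁ - m₂‖ ∧
    ∀ α ∈ Set.Ioc ε (1 / 2 : ℝ),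
      Metric.hausdorffDist (hdRegion d μ α) (hdRegion d ν α) = ‖m₁ - m₂‖ :=
  stmt_19_general d m₁ m₂ S hS μ ν hμ hν ε hε hε2
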